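/- arXiv:1612.09196 — 2 statements merged into one kernel-verified Lean document; each statement's English description precedes it below -/
import Mathlib

section
/- For every real ν with ν ∉ {−1,−2,−3,…}, every real x ≥ 0, and every real t with |t| < 1, the series Σ_{m=0}^∞ q^{−νm/2} J_ν(x q^m; q) t^m/(q;q)_m converges and equals x^{ν/2} · (q^{ν+1};q)_∞ / ((q;q)_∞ (t;q)_∞) · Σ_{k=0}^∞ (−1)^k q^{k(k−1)/2} (t;q)_k (qx)^k / ((q;q)_k (q^{ν+1};q)_k). -/
open scoped BigOperators

/-- The finite q-Pochhammer symbol `(a;q)_n`. -/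
noncomputable def qPoch (q a : ℝ) (n : ℕ) : ℝ := ∏ k ∈ Finset.range n, (1 - a * q ^ k)

/-- The infinite q-Pochhammer symbol `(a;q)_∞`. -/
noncomputable def qPochInf (q a : ℝ) : ℝ := ∏' k : ℕ, (1 - a * q ^ k)

/-- Jackson's third q-Bessel function `J_ν(x;q)` for real order `ν`. -/
noncomputable def qBessel (q ν x : ℝ) : ℝ :=
  x ^ (ν / 2) * (qPochInf q (q ^ (ν + 1)) / qPochInf q q) *
    ∑' k : ℕ, (-1 : ℝ) ^ k * q ^ (k * (k - 1) / 2) * (q * x) ^ k /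
      (qPoch q q k * qPoch q (q ^ (ν + 1)) k)

/-- Jackson's third q-Bessel function of integer order, extended to negative
integer orders by `J_{-n}(x;q) = (-1)^n q^{n/2} J_n(x q^n; q)`. -/
noncomputable def qBesselZ (q : ℝ) (ν : ℤ) (x : ℝ) : ℝ :=
  if 0 ≤ ν then qBessel q (ν : ℝ) x
  else (-1 : ℝ) ^ (-ν).toNat * q ^ (((-ν).toNat : ℝ) / 2) *
    qBessel q ((-ν).toNat : ℝ) (x * q ^ (-ν).toNat)

/-!
Write `a_k` for the coefficients of the series defining `J_ν`. Rescaling `x ↦ x q^m` turns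
`q^(-νm/2) J_ν(x q^m; q)` into `x^(ν/2) (q^(ν+1);q)_∞/(q;q)_∞ · Σ_k a_k q^(mk)`, so the left
side is a double series `Σ_{m,k} a_k (t q^k)^m / (q;q)_m`, which converges absolutely.
Summing over `m` first with Euler's identity `Σ_m z^m/(q;q)_m = 1/(z;q)_∞` at `z = t q^k`, and
using `(t;q)_∞ = (t;q)_k (t q^k;q)_∞`, gives the right side.

Euler's identity itself comes from the functional equation `E(qz) = (1 - z) E(z)` of
`E(z) = Σ_m z^m/(q;q)_m`: iterating it gives `E(z) (z;q)_n = E(z q^n) → E(0) = 1`.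
-/

open Filter Topology

variable {q z : ℝ}

lemma abs_mul_pow_le (hq : |q| ≤ 1) (z : ℝ) (k : ℕ) : |z * q ^ k| ≤ |z| := by
  rw [abs_mul, abs_pow]
  exact mul_le_of_le_one_right (abs_nonneg z) (pow_le_one₀ (abs_nonneg q) hq)

lemma abs_mul_pow_lt_one (hq : |q| ≤ 1) (hz : |z| < 1) (k : ℕ) : |z * q ^ k| < 1 :=
  (abs_mul_pow_le hq z k).trans_lt hz

lemma one_sub_mul_pow_pos (hq : |q| ≤ 1) (hz : |z| < 1) (k : ℕ) : 0 < 1 - z * q ^ k := by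
  linarith [le_abs_self (z * q ^ k), abs_mul_pow_lt_one hq hz k]

lemma qPoch_succ (q z : ℝ) (n : ℕ) : qPoch q z (n + 1) = qPoch q z n * (1 - z * q ^ n) :=
  Finset.prod_range_succ _ n

lemma qPoch_pos (hq : |q| ≤ 1) (hz : |z| < 1) (n : ℕ) : 0 < qPoch q z n :=
  Finset.prod_pos fun k _ => one_sub_mul_pow_pos hq hz k

lemma hasProd_one_sub_mul_pow (hq : |q| < 1) (hz : |z| < 1) :
    HasProd (fun k => 1 - z * q ^ k) (Real.exp (∑' k, Real.log (1 - z * q ^ k))) := by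
  have hgeom : Summable fun k => -z * q ^ k :=
    (summable_geometric_of_abs_lt_one hq).mul_left (-z)
  have hlog : Summable fun k => Real.log (1 - z * q ^ k) := by
    simpa [sub_eq_add_neg] using Real.summable_log_one_add_of_summable hgeom
  exact Real.hasProd_of_hasSum_log (one_sub_mul_pow_pos hq.le hz) hlog.hasSum

lemma hasProd_qPochInf (hq : |q| < 1) (hz : |z| < 1) :
    HasProd (fun k => 1 - z * q ^ k) (qPochInf q z) :=
  (hasProd_one_sub_mul_pow hq hz).multipliable.hasProd

lemma qPochInf_pos (hq : |q| < 1) (hz : |z| < 1) : 0 < qPochInf q z := by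
  rw [qPochInf, (hasProd_one_sub_mul_pow hq hz).tprod_eq]
  exact Real.exp_pos _

lemma qPochInf_eq_qPoch_mul (hq : |q| < 1) (hz : |z| < 1) (k : ℕ) :
    qPochInf q z = qPoch q z k * qPochInf q (z * q ^ k) := by
  have hshift : (fun n => 1 - z * q ^ (n + k)) = fun n => 1 - z * q ^ k * q ^ n := by
    funext n; ring
  have hmul : Multipliable fun n => 1 - z * q ^ (n + k) := by
    rw [hshift]
    exact (hasProd_qPochInf hq (abs_mul_pow_lt_one hq.le hz k)).multipliable
  calc qPochInf q z = qPoch q z k * ∏' n, (1 - z * q ^ (n + k)) :=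
        (hmul.prod_mul_tprod_nat_mul' (f := fun n => 1 - z * q ^ n)).symm
    _ = qPoch q z k * qPochInf q (z * q ^ k) := by rw [hshift, qPochInf]

lemma summable_of_succ_eq_mul {R : Type*} [NormedRing R] [CompleteSpace R] {f ρ : ℕ → R}
    {r : R} (hf : ∀ n, f (n + 1) = f n * ρ n) (hρ : Tendsto ρ atTop (𝓝 r)) (hr : ‖r‖ < 1) :
    Summable f := by
  obtain ⟨s, hrs, hs1⟩ := exists_between hr
  refine summable_of_ratio_norm_eventually_le hs1 ?_
  filter_upwards [hρ.norm.eventually_le_const hrs] with n hn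
  calc ‖f (n + 1)‖ ≤ ‖f n‖ * ‖ρ n‖ := hf n ▸ norm_mul_le _ _
    _ ≤ s * ‖f n‖ := by rw [mul_comm]; gcongr

lemma summable_pow_div_qPoch (hq : |q| < 1) (hz : |z| < 1) :
    Summable fun m => z ^ m / qPoch q q m := by
  refine summable_of_succ_eq_mul (ρ := fun m => z * (1 - q * q ^ m)⁻¹) (fun m => ?_) ?_
    (r := z) hz
  · rw [qPoch_succ, pow_succ, ← div_eq_mul_inv, div_mul_div_comm]
  · have hpow := tendsto_pow_atTop_nhds_zero_of_abs_lt_one hq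
    have hden : Tendsto (fun m => 1 - q * q ^ m) atTop (𝓝 1) := by
      simpa using tendsto_const_nhds.sub (hpow.const_mul q)
    simpa using (hden.inv₀ one_ne_zero).const_mul z

lemma tsum_pow_div_qPoch_mul_left (hq : |q| < 1) (hz : |z| < 1) :
    ∑' m, (q * z) ^ m / qPoch q q m = (1 - z) * ∑' m, z ^ m / qPoch q q m := by
  have hS := summable_pow_div_qPoch hq hz
  have hqS := summable_pow_div_qPoch hq (z := q * z)
    (by simpa [mul_comm] using abs_mul_pow_lt_one hq.le hz 1)
  have hdiff : ∀ m, z ^ m / qPoch q q m - (q * z) ^ m / qPoch q q m =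
      z ^ m * (1 - q ^ m) / qPoch q q m := fun m => by rw [mul_pow]; ring
  have hshift : ∀ m, z ^ (m + 1) * (1 - q ^ (m + 1)) / qPoch q q (m + 1) =
      z * (z ^ m / qPoch q q m) := fun m => by
    have h1 := (one_sub_mul_pow_pos hq.le hq m).ne'
    have h2 := (qPoch_pos hq.le hq m).ne'
    rw [qPoch_succ, pow_succ' q]
    field_simp
    ring
  have hsub : ∑' m, z ^ m / qPoch q q m - ∑' m, (q * z) ^ m / qPoch q q m =
      z * ∑' m, z ^ m / qPoch q q m := by
    rw [← hS.tsum_sub hqS, (hS.sub hqS).tsum_eq_zero_add]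
    simp only [hdiff, hshift, tsum_mul_left]
    simp
  linear_combination -hsub

lemma tsum_pow_div_qPoch_mul_qPoch (hq : |q| < 1) (hz : |z| < 1) (n : ℕ) :
    (∑' m, z ^ m / qPoch q q m) * qPoch q z n = ∑' m, (z * q ^ n) ^ m / qPoch q q m := by
  induction n with
  | zero => simp [qPoch]
  | succ n ih =>
    rw [qPoch_succ, ← mul_assoc, ih, mul_comm,
      ← tsum_pow_div_qPoch_mul_left hq (abs_mul_pow_lt_one hq.le hz n)]
    congr 1
    funext m
    ring

lemma tendsto_tsum_pow_mul_pow_div_qPoch (hq : |q| < 1) (hz : |z| < 1) :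
    Tendsto (fun n => ∑' m, (z * q ^ n) ^ m / qPoch q q m) atTop (𝓝 1) := by
  have hpow := tendsto_pow_atTop_nhds_zero_of_abs_lt_one hq
  have hlim : ∑' m : ℕ, (z * 0) ^ m / qPoch q q m = 1 := by
    rw [tsum_eq_single 0 fun m hm => by simp [hm]]
    simp [qPoch]
  rw [← hlim]
  refine tendsto_tsum_of_dominated_convergence (summable_pow_div_qPoch hq hz).norm
    (fun m => ((tendsto_const_nhds.mul hpow).pow m).div_const _) (.of_forall fun n m => ?_)
  rw [norm_div, norm_div, norm_pow, norm_pow]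
  gcongr
  exact abs_mul_pow_le hq.le z n

theorem hasSum_pow_div_qPoch (hq : |q| < 1) (hz : |z| < 1) :
    HasSum (fun m => z ^ m / qPoch q q m) (qPochInf q z)⁻¹ := by
  have hlim : Tendsto (fun n => (∑' m, z ^ m / qPoch q q m) * qPoch q z n) atTop
      (𝓝 ((∑' m, z ^ m / qPoch q q m) * qPochInf q z)) :=
    (hasProd_qPochInf hq hz).tendsto_prod_nat.const_mul _
  simp only [tsum_pow_div_qPoch_mul_qPoch hq hz] at hlim
  have hprod := tendsto_nhds_unique hlim (tendsto_tsum_pow_mul_pow_div_qPoch hq hz)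
  rw [← eq_inv_of_mul_eq_one_left hprod]
  exact (summable_pow_div_qPoch hq hz).hasSum

theorem hasSum_pow_div_qPoch_mul_tsum (hq : |q| < 1) {a : ℕ → ℝ} (ha : Summable a) {t : ℝ}
    (ht : |t| < 1) :
    HasSum (fun m => t ^ m / qPoch q q m * ∑' k, a k * (q ^ m) ^ k)
      ((∑' k, a k * qPoch q t k) / qPochInf q t) := by
  set F : ℕ → ℕ → ℝ := fun m k => t ^ m / qPoch q q m * (a k * (q ^ m) ^ k)
  have hqmk (m k : ℕ) : ‖(q ^ m) ^ k‖ ≤ 1 := by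
    rw [← pow_mul, norm_pow]
    exact pow_le_one₀ (norm_nonneg q) hq.le
  have hrow (m : ℕ) : HasSum (F m) (t ^ m / qPoch q q m * ∑' k, a k * (q ^ m) ^ k) := by
    refine (Summable.hasSum ?_).mul_left _
    refine ha.norm.of_norm_bounded fun k => ?_
    rw [norm_mul]
    exact mul_le_of_le_one_right (norm_nonneg _) (hqmk m k)
  have hcol (k : ℕ) : HasSum (fun m => F m k) (a k * qPoch q t k / qPochInf q t) := by
    have hterm : (fun m => F m k) = fun m => a k * ((t * q ^ k) ^ m / qPoch q q m) := by
      funext m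
      simp only [F, mul_pow, ← pow_mul, mul_comm k m]
      ring
    have hval : a k * qPoch q t k / qPochInf q t = a k * (qPochInf q (t * q ^ k))⁻¹ := by
      have hP := (qPoch_pos hq.le ht k).ne'
      rw [qPochInf_eq_qPoch_mul hq ht k]
      field_simp
    rw [hterm, hval]
    exact (hasSum_pow_div_qPoch hq (abs_mul_pow_lt_one hq.le ht k)).mul_left (a k)
  have hF : Summable (Function.uncurry F) := by
    refine ((summable_pow_div_qPoch hq ht).norm.mul_norm ha.norm).of_norm_bounded
      fun ⟨m, k⟩ => ?_
    simp only [Function.uncurry, F, norm_mul]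
    exact mul_le_mul_of_nonneg_left (mul_le_of_le_one_right (norm_nonneg _) (hqmk m k))
      (norm_nonneg _)
  convert hF.hasSum.prod_fiberwise hrow using 1
  rw [← tsum_div_const, ← (Equiv.prodComm ℕ ℕ).tsum_eq]
  exact (hF.prod_symm.hasSum.prod_fiberwise hcol).tsum_eq

noncomputable def qBesselCoeff (q b x : ℝ) (k : ℕ) : ℝ :=
  (-1) ^ k * q ^ (k * (k - 1) / 2) * (q * x) ^ k / (qPoch q q k * qPoch q b k)

lemma qBessel_eq_tsum_qBesselCoeff (q ν x : ℝ) :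
    qBessel q ν x = x ^ (ν / 2) * (qPochInf q (q ^ (ν + 1)) / qPochInf q q) *
      ∑' k, qBesselCoeff q (q ^ (ν + 1)) x k :=
  rfl

lemma qBesselCoeff_succ (q b x : ℝ) (k : ℕ) :
    qBesselCoeff q b x (k + 1) =
      qBesselCoeff q b x k * (-(q ^ k * (q * x)) * ((1 - q * q ^ k) * (1 - b * q ^ k))⁻¹) := by
  have hexp : (k + 1) * (k + 1 - 1) / 2 = k * (k - 1) / 2 + k := by
    rcases k with _ | k
    · rfl
    · rw [Nat.add_sub_cancel, Nat.add_sub_cancel, show (k + 1 + 1) * (k + 1) =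
        (k + 1) * k + 2 * (k + 1) by ring, Nat.add_mul_div_left _ _ two_pos]
  simp only [qBesselCoeff, qPoch_succ, hexp, pow_add, pow_succ, mul_inv, div_eq_mul_inv]
  ring

-- No condition on `b`: where `(b;q)_k` vanishes, the coefficients are `0` since `x / 0 = 0`.
lemma summable_qBesselCoeff (hq : |q| < 1) (b x : ℝ) : Summable (qBesselCoeff q b x) := by
  refine summable_of_succ_eq_mul (qBesselCoeff_succ q b x) ?_ (r := 0) (by simp)
  have hpow := tendsto_pow_atTop_nhds_zero_of_abs_lt_one hq
  have hden : Tendsto (fun k => (1 - q * q ^ k) * (1 - b * q ^ k)) atTop (𝓝 1) := by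
    simpa using ((tendsto_const_nhds (x := (1 : ℝ))).sub (hpow.const_mul q)).mul
      ((tendsto_const_nhds (x := (1 : ℝ))).sub (hpow.const_mul b))
  simpa using (hpow.mul_const (q * x)).neg.mul (hden.inv₀ one_ne_zero)

lemma qBesselCoeff_mul_pow (q b x : ℝ) (m k : ℕ) :
    qBesselCoeff q b (x * q ^ m) k = qBesselCoeff q b x k * (q ^ m) ^ k := by
  simp only [qBesselCoeff, ← mul_assoc, mul_pow]
  ring

lemma rpow_mul_qBessel_mul_pow (hq : 0 < q) {x : ℝ} (hx : 0 ≤ x) (ν : ℝ) (m : ℕ) :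
    q ^ (-(ν * m) / 2) * qBessel q ν (x * q ^ m) =
      x ^ (ν / 2) * (qPochInf q (q ^ (ν + 1)) / qPochInf q q) *
        ∑' k, qBesselCoeff q (q ^ (ν + 1)) x k * (q ^ m) ^ k := by
  have hscale : q ^ (-(ν * m) / 2) * (x * q ^ m) ^ (ν / 2) = x ^ (ν / 2) := by
    rw [Real.mul_rpow hx (by positivity), ← Real.rpow_natCast, ← Real.rpow_mul hq.le,
      mul_left_comm, ← Real.rpow_add hq, show -(ν * m) / 2 + m * (ν / 2) = 0 by ring,
      Real.rpow_zero, mul_one]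
  rw [qBessel_eq_tsum_qBesselCoeff, ← hscale]
  simp only [qBesselCoeff_mul_pow]
  ring

theorem qBessel_generating_function_general (q : ℝ) (hq0 : 0 < q) (hq1 : q < 1)
    (ν : ℝ) (x : ℝ) (hx : 0 ≤ x)
    (t : ℝ) (ht : |t| < 1) :
    HasSum
      (fun m : ℕ => q ^ (-(ν * (m : ℝ)) / 2) * qBessel q ν (x * q ^ m) * t ^ m / qPoch q q m)
      (x ^ (ν / 2) * (qPochInf q (q ^ (ν + 1)) / (qPochInf q q * qPochInf q t)) *
        ∑' k : ℕ, (-1 : ℝ) ^ k * q ^ (k * (k - 1) / 2) * qPoch q t k * (q * x) ^ k /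
          (qPoch q q k * qPoch q (q ^ (ν + 1)) k)) := by
  have hq : |q| < 1 := abs_lt.mpr ⟨by linarith, hq1⟩
  set C := x ^ (ν / 2) * (qPochInf q (q ^ (ν + 1)) / qPochInf q q)
  have hterm (m : ℕ) :
      q ^ (-(ν * (m : ℝ)) / 2) * qBessel q ν (x * q ^ m) * t ^ m / qPoch q q m =
        C * (t ^ m / qPoch q q m * ∑' k, qBesselCoeff q (q ^ (ν + 1)) x k * (q ^ m) ^ k) := by
    rw [rpow_mul_qBessel_mul_pow hq0 hx]
    ring
  have hsum := ((hasSum_pow_div_qPoch_mul_tsum hq (summable_qBesselCoeff hq _ x) ht).mul_left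
    C).congr_fun hterm
  have hseries : ∑' k, qBesselCoeff q (q ^ (ν + 1)) x k * qPoch q t k =
      ∑' k : ℕ, (-1 : ℝ) ^ k * q ^ (k * (k - 1) / 2) * qPoch q t k * (q * x) ^ k /
        (qPoch q q k * qPoch q (q ^ (ν + 1)) k) :=
    tsum_congr fun k => by rw [qBesselCoeff]; ring
  refine hsum.summable.hasSum_iff.mpr ?_
  rw [hsum.tsum_eq, hseries]
  ring

/-- Generating function for Jackson's third q-Bessel functions
(Proposition 3.2 / "prop:generating function"). -/
theorem qBessel_generating_function (q : ℝ) (hq0 : 0 < q) (hq1 : q < 1)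
    (ν : ℝ) (hν : ∀ n : ℕ, ν ≠ -((n : ℝ) + 1)) (x : ℝ) (hx : 0 ≤ x)
    (t : ℝ) (ht : |t| < 1) :
    HasSum
      (fun m : ℕ => q ^ (-(ν * (m : ℝ)) / 2) * qBessel q ν (x * q ^ m) * t ^ m / qPoch q q m)
      (x ^ (ν / 2) * (qPochInf q (q ^ (ν + 1)) / (qPochInf q q * qPochInf q t)) *
        ∑' k : ℕ, (-1 : ℝ) ^ k * q ^ (k * (k - 1) / 2) * qPoch q t k * (q * x) ^ k /
          (qPoch q q k * qPoch q (q ^ (ν + 1)) k)) :=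
  qBessel_generating_function_general q hq0 hq1 ν x hx t ht
end

section
/- For every d ≥ 1, every ν = (ν_0,…,ν_{d+1}) ∈ ℤ^{d+2} and all x, λ ∈ ℤ^d, the multivariate q-Bessel function is self-dual: J_ν(x,λ;q) = J_{ν̂}(λ̂, x̂; q), where ν̂ = (ν_{d+1}, ν_d, …, ν_1, ν_0), x̂ = (x_d,…,x_1) and λ̂ = (λ_d,…,λ_1) denote the vectors with reversed entries. -/
open scoped BigOperators

/-- The multivariate q-Bessel function `J_ν(x,λ;q)` in `d` variables; the vectors
are encoded as functions on `ℕ`, where `ν` uses the indices `0,…,d+1` and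
`x`, `lam` use the indices `1,…,d`, with the conventions `λ_0 = ν_0` and
`x_{d+1} = ν_{d+1}`. -/
noncomputable def multiJ (q : ℝ) (d : ℕ) (ν x lam : ℕ → ℤ) : ℝ :=
  let X : ℕ → ℤ := fun j => if j = d + 1 then ν (d + 1) else x j
  let L : ℕ → ℤ := fun j => if j = 0 then ν 0 else lam j
  ∏ j ∈ Finset.Icc 1 d,
    qBesselZ q (ν j - X (j + 1) - L (j - 1)) (q ^ (X j - X (j + 1) + L j - L (j - 1)))

/-- Self-duality of the multivariate q-Bessel functions
(Theorem 4.1(ii)): `J_ν(x,λ) = J_{ν̂}(λ̂,x̂)` with reversed vectors. -/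
theorem multiJ_self_dual (q : ℝ) (hq0 : 0 < q) (hq1 : q < 1)
    (d : ℕ) (hd : 1 ≤ d) (ν x lam : ℕ → ℤ) :
    multiJ q d ν x lam =
      multiJ q d (fun j => ν (d + 1 - j)) (fun j => lam (d + 1 - j))
        (fun j => x (d + 1 - j)) := by
  unfold multiJ
  refine Finset.prod_nbij' (fun j => d + 1 - j) (fun j => d + 1 - j)
    (fun a ha => ?_) (fun a ha => ?_) (fun a ha => ?_) (fun a ha => ?_) (fun a ha => ?_)
  · simp only [Finset.mem_Icc] at ha ⊢; omega
  · simp only [Finset.mem_Icc] at ha ⊢; omega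
  · simp only [Finset.mem_Icc] at ha; omega
  · simp only [Finset.mem_Icc] at ha; omega
  · simp only [Finset.mem_Icc] at ha
    obtain ⟨h1, h2⟩ := ha
    have e1 : d + 1 - a + 1 = d + 1 ↔ a = 1 := by omega
    have e2 : d + 1 - a - 1 = 0 ↔ a = d := by omega
    have e3 : ¬(d + 1 - a = d + 1) := by omega
    have e4 : d + 1 - (d + 1 - a) = a := by omega
    have e5 : d + 1 - (d + 1 - a + 1) = a - 1 := by omega
    have e6 : d + 1 - (d + 1 - a - 1) = a + 1 := by omega
    have e7 : ¬(d + 1 - a = 0) := by omega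
    have e8 : ¬(a = 0) := by omega
    have e9 : a + 1 = d + 1 ↔ a = d := by omega
    have e10 : a - 1 = 0 ↔ a = 1 := by omega
    have e11 : ¬(a = d + 1) := by omega
    simp only [e1, e2, e3, e4, e5, e6, e7, e8, e9, e10, e11, if_false, Nat.sub_self,
      Nat.sub_zero]
    generalize (if a = d then ν (d + 1) else x (a + 1)) = A
    generalize (if a = 1 then ν 0 else lam (a - 1)) = B
    congr 1
    · ring
    · congr 1
      ring
end
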